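/- Assume x/(log x - 1 - 1/log x - 1/log^2 x) < π(x) for all x ≥ 1772201. Then for all k with p_k ≥ 1772201, with f_k := p_k^{1+1/k} - p_k, we have f_k < log^2 p_k - log p_k - 1. -/

import Mathlib

/-!
Write `x = p_k`, `L = log x` and `t = L / k`, so that `f_k = x (e^t - 1)`. Since `π(x) = k`,
the hypothesis gives `x t < L (L - 1 - 1/L - 1/L²) = A - 1/L` with `A = L² - L - 1`.
From `e^t ≤ 1/(1 - t)` we get `f_k ≤ x t / (1 - t)`, which is below `A` as soon as `A t ≤ 1/L`;
that holds because `t < L² / x` and `L⁵ ≤ x` once `x ≥ e¹⁴`.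
-/

open Real

/-- `p k` is the `k`-th prime, 1-indexed: `p 1 = 2`, `p 2 = 3`, ... -/
noncomputable def p (k : ℕ) : ℕ := Nat.nth Nat.Prime (k - 1)

lemma p_zero : p 0 = 2 := Nat.nth_prime_zero_eq_two

lemma primeCounting_p {k : ℕ} (hk : k ≠ 0) : Nat.primeCounting (p k) = k := by
  obtain ⟨n, rfl⟩ := Nat.exists_eq_succ_of_ne_zero hk
  simp [p, Nat.primeCounting, Nat.primeCounting', Nat.count_succ, Nat.prime_nth_prime,
    Nat.count_nth_of_infinite Nat.infinite_setOfPred_prime]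

lemma exp_fourteen_lt : exp 14 < 1772201 :=
  calc exp 14 = exp 1 ^ 14 := by rw [← exp_nat_mul]; norm_num
    _ < 2.7182818286 ^ 14 := by gcongr; exact exp_one_lt_d9
    _ < 1772201 := by norm_num

lemma le_exp_div_five {L : ℝ} (hL : 14 ≤ L) : L ≤ exp (L / 5) := by
  have htaylor := sum_le_exp_of_nonneg (by linarith : (0 : ℝ) ≤ L / 5) 6
  simp only [Finset.sum_range_succ, Finset.sum_range_zero, Nat.factorial] at htaylor
  norm_num at htaylor
  nlinarith [pow_nonneg (by linarith : (0 : ℝ) ≤ L - 14) 2,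
    pow_nonneg (by linarith : (0 : ℝ) ≤ L - 14) 3,
    pow_nonneg (by linarith : (0 : ℝ) ≤ L - 14) 4,
    pow_nonneg (by linarith : (0 : ℝ) ≤ L - 14) 5]

lemma log_pow_five_le {x : ℝ} (hx : exp 14 ≤ x) : log x ^ 5 ≤ x := by
  have hx0 : 0 < x := (exp_pos 14).trans_le hx
  have hL : 14 ≤ log x := by simpa using log_le_log (exp_pos 14) hx
  calc log x ^ 5 ≤ exp (log x / 5) ^ 5 := by gcongr; exact le_exp_div_five hL
    _ = x := by rw [← exp_nat_mul, Nat.cast_ofNat, mul_div_cancel₀ _ (by norm_num), exp_log hx0]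

lemma mul_exp_sub_one_lt {x t A ε : ℝ} (hx : 0 ≤ x) (hA : 0 < A) (ht : 0 ≤ t)
    (hxt : x * t < A - ε) (hAt : A * t ≤ ε) : x * (exp t - 1) < A := by
  have hxt_nonneg : 0 ≤ x * t := mul_nonneg hx ht
  have ht1 : t < 1 := by nlinarith
  have hexp : exp t - 1 ≤ t / (1 - t) :=
    calc exp t - 1 ≤ 1 / (1 - t) - 1 := by linarith [exp_bound_div_one_sub_of_interval ht ht1]
      _ = t / (1 - t) := by field_simp [(by linarith : 1 - t ≠ 0)]; ring
  calc x * (exp t - 1) ≤ x * (t / (1 - t)) := by gcongr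
    _ = x * t / (1 - t) := by ring
    _ < A := by rw [div_lt_iff₀ (by linarith)]; nlinarith

lemma rpow_one_add_inv_sub_lt_of_div_lt {x K : ℝ} (hL : 2 ≤ log x) (hx : log x ^ 5 ≤ x)
    (hK : 0 < K) (h : x / (log x - 1 - 1 / log x - 1 / log x ^ 2) < K) :
    x ^ (1 + 1 / K) - x < log x ^ 2 - log x - 1 := by
  set L := log x
  have hx0 : 0 < x := by nlinarith [pow_le_pow_left₀ (by norm_num) hL 5]
  have hL0 : 0 < L := by linarith
  set t := L / K with htdef
  have ht0 : 0 < t := by positivity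
  have hD : 0 < L - 1 - 1 / L - 1 / L ^ 2 := by
    have h1 : 1 / L ≤ 1 / 2 := by gcongr
    have h2 : 1 / L ^ 2 ≤ 1 / 4 := by rw [one_div_le_one_div (by positivity) (by norm_num)]; nlinarith
    linarith
  have hxt : x * t < L ^ 2 - L - 1 - 1 / L := by
    rw [div_lt_iff₀ hD] at h
    calc x * t < K * (L - 1 - 1 / L - 1 / L ^ 2) * t := by gcongr
      _ = L ^ 2 - L - 1 - 1 / L := by rw [htdef]; field_simp
  have hL3t : L ^ 3 * t < 1 := by
    have hxt' : x * t < L ^ 2 := by nlinarith [one_div_pos.mpr hL0]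
    have : L ^ 3 * t * x < 1 * x := by nlinarith [pow_pos hL0 3]
    exact lt_of_mul_lt_mul_right this hx0.le
  have hAt : (L ^ 2 - L - 1) * t ≤ 1 / L := by
    rw [le_div_iff₀ hL0]; nlinarith
  have hrpow : x ^ (1 + 1 / K) = x * exp t := by
    rw [rpow_add hx0, rpow_one, rpow_def_of_pos hx0, htdef, mul_one_div]
  rw [hrpow, ← mul_sub_one]
  exact mul_exp_sub_one_lt hx0.le (by nlinarith) ht0.le hxt hAt

theorem stmt_12
    (axler : ∀ x : ℝ, 1772201 ≤ x →
      x / (Real.log x - 1 - 1 / Real.log x - 1 / (Real.log x) ^ 2) <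
        (Nat.primeCounting ⌊x⌋₊ : ℝ)) :
    ∀ k : ℕ, 1772201 ≤ p k →
      (p k : ℝ) ^ (1 + 1 / (k : ℝ)) - (p k : ℝ) <
        (Real.log (p k)) ^ 2 - Real.log (p k) - 1 := by
  intro k hk
  have hk0 : k ≠ 0 := by rintro rfl; rw [p_zero] at hk; norm_num at hk
  have hx : (1772201 : ℝ) ≤ p k := by exact_mod_cast hk
  have hexp : exp 14 ≤ p k := exp_fourteen_lt.le.trans hx
  have hL : 14 ≤ log (p k) := by simpa using log_le_log (exp_pos 14) hexp
  have hcount := axler _ hx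
  rw [Nat.floor_natCast, primeCounting_p hk0] at hcount
  exact rpow_one_add_inv_sub_lt_of_div_lt (by linarith) (log_pow_five_le hexp)
    (by positivity) hcount
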